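/- arXiv:math/0612003 — 2 statements merged into one kernel-verified Lean document; each statement's English description precedes it below -/
import Mathlib

section
/- Let G = (V,E) be a finite connected simple graph and let O be an orientation of G. The following are equivalent: (i) O is strongly connected, i.e. every vertex is reachable from every vertex; (ii) O has no directed cocycle; (iii) for every edge of G, the origin of the corresponding arc is reachable from its end. -/
/-- An orientation of a simple graph: a choice of direction for each edge. -/
structure GraphOrientation {V : Type*} (G : SimpleGraph V) where
  dir : V → V → Prop
  adj_of_dir : ∀ u v, dir u v → G.Adj u v
  dir_iff_not : ∀ u v, G.Adj u v → (dir u v ↔ ¬ dir v u)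

namespace GraphOrientation

variable {V : Type*} {G : SimpleGraph V}

/-- The outdegree of a vertex: the number of edges directed away from it. -/
noncomputable def outDegree (O : GraphOrientation G) (v : V) : ℕ :=
  {u | O.dir v u}.ncard

/-- `v` is reachable from `u` by a directed path. -/
def Reaches (O : GraphOrientation G) : V → V → Prop :=
  Relation.ReflTransGen O.dir

/-- `C` is the edge set of a directed cycle of the orientation. -/
def IsDirCycle (O : GraphOrientation G) (C : Set (Sym2 V)) : Prop :=
  ∃ (v : V) (w : G.Walk v v), w.IsCycle ∧
    (∀ d ∈ w.darts, O.dir d.toProd.1 d.toProd.2) ∧ C = {e | e ∈ w.edges}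

/-- The orientation is strongly connected. -/
def IsStronglyConnected (O : GraphOrientation G) : Prop := ∀ u v, O.Reaches u v

/-- Every vertex is reachable from `v0`. -/
def IsConnectedFrom (O : GraphOrientation G) (v0 : V) : Prop := ∀ v, O.Reaches v0 v

/-- The set of edges on which two orientations differ. -/
def diffSet (O O' : GraphOrientation G) : Set (Sym2 V) :=
  {e | ∃ a b, e = s(a, b) ∧ O.dir a b ∧ O'.dir b a}

/-- `O'` is obtained from `O` by reversing exactly the edges of `A`. -/
def IsFlipOn (O O' : GraphOrientation G) (A : Set (Sym2 V)) : Prop :=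
  (∀ u v, s(u, v) ∈ A → (O'.dir u v ↔ O.dir v u)) ∧
    (∀ u v, s(u, v) ∉ A → (O'.dir u v ↔ O.dir u v))

/-- One cycle-flip step. -/
def CycleFlip (O O' : GraphOrientation G) : Prop :=
  ∃ C, O.IsDirCycle C ∧ O.IsFlipOn O' C

end GraphOrientation

/-- The cut defined by a vertex subset `U`: edges with exactly one endpoint in `U`. -/
def SimpleGraph.cutSet {V : Type*} (G : SimpleGraph V) (U : Set V) : Set (Sym2 V) :=
  {e | ∃ a b, e = s(a, b) ∧ G.Adj a b ∧ a ∈ U ∧ b ∉ U}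

/-- A cocycle: a minimal nonempty cut. -/
def SimpleGraph.IsCocycle {V : Type*} (G : SimpleGraph V) (D : Set (Sym2 V)) : Prop :=
  D.Nonempty ∧ (∃ U : Set V, D = G.cutSet U) ∧
    ∀ D' : Set (Sym2 V), D'.Nonempty → (∃ U : Set V, D' = G.cutSet U) → D' ⊆ D → D' = D

/-- A directed cocycle: a cocycle all of whose edges are directed toward the same side. -/
def GraphOrientation.IsDirCocycle {V : Type*} {G : SimpleGraph V}
    (O : GraphOrientation G) (D : Set (Sym2 V)) : Prop :=
  G.IsCocycle D ∧ ∃ U : Set V, D = G.cutSet U ∧ ∀ a b, O.dir a b → s(a, b) ∈ D → b ∈ U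

/-- The excess of a subset of vertices with respect to `δ : V → ℕ`. -/
noncomputable def SimpleGraph.excess {V : Type*} (G : SimpleGraph V) (δ : V → ℕ)
    (U : Finset V) : ℤ :=
  (∑ u ∈ U, (δ u : ℤ)) - ({e | e ∈ G.edgeSet ∧ ∀ x ∈ e, x ∈ U} : Set (Sym2 V)).ncard

/-- `C` is the edge set of a cycle of `G`. -/
def SimpleGraph.IsCycleEdgeSet {V : Type*} (G : SimpleGraph V) (C : Set (Sym2 V)) : Prop :=
  ∃ (v : V) (w : G.Walk v v), w.IsCycle ∧ C = {e | e ∈ w.edges}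

/-- The number of connected components of the spanning subgraph `(V, S)`. -/
noncomputable def numComponents (V : Type*) (S : Set (Sym2 V)) : ℕ :=
  Nat.card (SimpleGraph.fromEdgeSet S).ConnectedComponent
/-! Strong connectivity forbids directed cocycles, since a directed cocycle separates off a side
that no arc leaves. Conversely, if an arc `a → b` lies on no directed cycle, let `U` be the set of
vertices reachable from `b`, let `X` be the component of `a` in the subgraph induced on the
complement of `U`, and let `W` be the complement of `X`. Every edge between `X` and `W` ends in `U`,
which no arc leaves, so these edges all point into `W`. Both `X` and `W` are connected after
deleting the cut, which makes the cut of `W` minimal, i.e. a directed cocycle. -/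

namespace SimpleGraph

variable {V : Type*} {G : SimpleGraph V}

theorem Reachable.mem_of_adj {S : Set V} (hS : ∀ x y, G.Adj x y → x ∈ S → y ∈ S) {u v : V}
    (h : G.Reachable u v) (hu : u ∈ S) : v ∈ S := by
  obtain ⟨p⟩ := h
  by_contra hv
  obtain ⟨d, -, hd₁, hd₂⟩ := p.exists_boundary_dart S hu hv
  exact hd₂ (hS _ _ d.adj hd₁)

theorem Reachable.mem_iff {S : Set V} (hS : ∀ x y, G.Adj x y → (x ∈ S ↔ y ∈ S)) {u v : V}
    (h : G.Reachable u v) : u ∈ S ↔ v ∈ S :=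
  ⟨h.mem_of_adj fun x y hxy => (hS x y hxy).1, h.symm.mem_of_adj fun x y hxy => (hS x y hxy).1⟩

theorem mem_cutSet_iff {U : Set V} {x y : V} :
    s(x, y) ∈ G.cutSet U ↔ G.Adj x y ∧ (x ∈ U ↔ y ∉ U) := by
  constructor
  · rintro ⟨p, q, he, hpq, hp, hq⟩
    rcases Sym2.eq_iff.1 he with ⟨rfl, rfl⟩ | ⟨rfl, rfl⟩
    · exact ⟨hpq, by tauto⟩
    · exact ⟨hpq.symm, by tauto⟩
  · rintro ⟨hxy, hU⟩
    by_cases hx : x ∈ U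
    · exact ⟨x, y, rfl, hxy, hx, hU.1 hx⟩
    · exact ⟨y, x, Sym2.eq_swap, hxy.symm, by tauto, hx⟩

theorem cutSet_compl (U : Set V) : G.cutSet Uᶜ = G.cutSet U := by
  ext e
  induction e using Sym2.ind
  simp only [mem_cutSet_iff, Set.mem_compl_iff]
  tauto

theorem deleteEdges_cutSet_adj {U : Set V} {x y : V} :
    (G.deleteEdges (G.cutSet U)).Adj x y ↔ G.Adj x y ∧ (x ∈ U ↔ y ∈ U) := by
  rw [deleteEdges_adj, mem_cutSet_iff]
  tauto

theorem Reachable.mem_iff_of_deleteEdges_cutSet {U : Set V} {u v : V}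
    (h : (G.deleteEdges (G.cutSet U)).Reachable u v) : u ∈ U ↔ v ∈ U :=
  h.mem_iff fun _ _ hxy => (deleteEdges_cutSet_adj.1 hxy).2

theorem isCocycle_cutSet {W : Set V} {a b : V} (hab : G.Adj a b) (ha : a ∉ W) (hb : b ∈ W)
    (hcomp : ∀ z, (G.deleteEdges (G.cutSet W)).Reachable a z ∨
      (G.deleteEdges (G.cutSet W)).Reachable b z) :
    G.IsCocycle (G.cutSet W) := by
  refine ⟨⟨s(a, b), mem_cutSet_iff.2 ⟨hab, by tauto⟩⟩, ⟨W, rfl⟩, ?_⟩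
  rintro D' ⟨e, he⟩ ⟨U', rfl⟩ hsub
  have hU' : ∀ {x y}, (G.deleteEdges (G.cutSet W)).Reachable x y → (x ∈ U' ↔ y ∈ U') :=
    fun h => h.mem_iff fun x y hxy => by
      obtain ⟨hxy, hW⟩ := deleteEdges_cutSet_adj.1 hxy
      by_contra hU
      have := (mem_cutSet_iff.1 (hsub (mem_cutSet_iff.2 ⟨hxy, by tauto⟩))).2
      tauto
  have hside : a ∈ U' ↔ b ∉ U' := by
    by_contra hsame
    have hconst : ∀ z, z ∈ U' ↔ a ∈ U' := fun z => by
      rcases hcomp z with h | h <;> have := hU' h <;> tauto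
    induction e using Sym2.ind with | _ p q => ?_
    have := (mem_cutSet_iff.1 he).2
    rw [hconst p, hconst q] at this
    tauto
  have hU'W : ∀ z, (z ∈ U' ↔ z ∈ W) ↔ b ∈ U' := fun z => by
    rcases hcomp z with h | h <;> have := hU' h <;> have := h.mem_iff_of_deleteEdges_cutSet <;>
      tauto
  by_cases hbU' : b ∈ U'
  · congr
    ext z
    exact (hU'W z).2 hbU'
  · rw [← cutSet_compl W]
    congr
    ext z
    simp only [Set.mem_compl_iff]
    have := hU'W z
    tauto

end SimpleGraph

namespace GraphOrientation

open SimpleGraph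

variable {V : Type*} {G : SimpleGraph V} (O : GraphOrientation G)

theorem dir_or_dir {u v : V} (h : G.Adj u v) : O.dir u v ∨ O.dir v u :=
  or_iff_not_imp_left.2 (O.dir_iff_not v u h.symm).2

theorem Reaches.mem_of_dir {O : GraphOrientation G} {S : Set V}
    (hS : ∀ x y, O.dir x y → x ∈ S → y ∈ S) {u v : V} (h : O.Reaches u v) (hu : u ∈ S) :
    v ∈ S := by
  induction h with
  | refl => exact hu
  | tail _ hd ih => exact hS _ _ hd ih

theorem not_exists_isDirCocycle (hO : O.IsStronglyConnected) :
    ¬ ∃ D : Set (Sym2 V), O.IsDirCocycle D := by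
  rintro ⟨_, ⟨⟨e, he⟩, -⟩, U, rfl, hinto⟩
  induction e using Sym2.ind with | _ p q => ?_
  obtain ⟨-, hpq⟩ := mem_cutSet_iff.1 he
  have hclosed : ∀ x y, O.dir x y → x ∈ U → y ∈ U := fun x y hxy hx => by
    by_contra hy
    exact hy (hinto x y hxy (mem_cutSet_iff.2 ⟨O.adj_of_dir x y hxy, by tauto⟩))
  have hp := (hO p q).mem_of_dir hclosed
  have hq := (hO q p).mem_of_dir hclosed
  tauto

theorem exists_isDirCocycle_of_not_reaches (hG : G.Connected) {a b : V} (hab : O.dir a b)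
    (hba : ¬ O.Reaches b a) : ∃ D, O.IsDirCocycle D := by
  set U := {v | O.Reaches b v}
  set K := G.deleteEdges (G.cutSet U)
  set W := {v | K.Reachable a v}ᶜ
  set H := G.deleteEdges (G.cutSet W)
  have hKU : ∀ {z}, K.Reachable a z → z ∉ U := fun h hz =>
    hba (h.mem_iff_of_deleteEdges_cutSet.2 hz)
  have hUW : ∀ {z}, z ∈ U → z ∈ W := fun hz hzX => hKU hzX hz
  have hcross : ∀ x y, G.Adj x y → x ∉ W → y ∈ W → y ∈ U := fun x y hxy hx hy => by
    by_contra hyU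
    have hx := not_not.1 hx
    exact hy (hx.trans (deleteEdges_cutSet_adj.2 ⟨hxy, iff_of_false (hKU hx) hyU⟩).reachable)
  have hinto : ∀ x y, O.dir x y → s(x, y) ∈ G.cutSet W → y ∈ W := fun x y hxy he => by
    by_contra hy
    have hx : x ∈ W := by have := (mem_cutSet_iff.1 he).2; tauto
    exact hKU (not_not.1 hy) ((hcross y x (O.adj_of_dir x y hxy).symm hy hx).tail hxy)
  have hKH : K ≤ H := fun x y hxy => by
    obtain ⟨hxy', -⟩ := deleteEdges_cutSet_adj.1 hxy
    refine deleteEdges_cutSet_adj.2 ⟨hxy', not_congr ?_⟩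
    exact ⟨fun h => h.trans hxy.reachable, fun h => h.trans hxy.symm.reachable⟩
  have hUH : ∀ {z}, O.Reaches b z → H.Reachable b z := fun h => by
    induction h with
    | refl => rfl
    | @tail m n hm hmn ih =>
      exact ih.trans (deleteEdges_cutSet_adj.2
        ⟨O.adj_of_dir m n hmn, iff_of_true (hUW hm) (hUW (hm.tail hmn))⟩).reachable
  have hcomp : ∀ z, H.Reachable a z ∨ H.Reachable b z := fun z => by
    refine (hG.preconnected b z).mem_of_adj (S := {z | H.Reachable a z ∨ H.Reachable b z})
      (fun x y hxy hx => ?_) (Or.inr Reachable.rfl)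
    by_cases hW : x ∈ W ↔ y ∈ W
    · exact hx.imp (·.trans (deleteEdges_cutSet_adj.2 ⟨hxy, hW⟩).reachable)
        (·.trans (deleteEdges_cutSet_adj.2 ⟨hxy, hW⟩).reachable)
    · by_cases hy : y ∈ W
      · exact Or.inr (hUH (hcross x y hxy (by tauto) hy))
      · exact Or.inl ((not_not.1 hy).mono hKH)
  exact ⟨_, isCocycle_cutSet (O.adj_of_dir a b hab) (not_not.2 Reachable.rfl) (hUW .refl) hcomp,
    W, rfl, hinto⟩

theorem isStronglyConnected_of_forall_reaches (hG : G.Connected)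
    (h : ∀ a b, O.dir a b → O.Reaches b a) : O.IsStronglyConnected := fun u v =>
  ((reachable_iff_reflTransGen u v).1 (hG.preconnected u v)).lift' id fun x y hxy =>
    (O.dir_or_dir hxy).elim .single (h y x)

end GraphOrientation

theorem statement5_general {V : Type*} (G : SimpleGraph V) (hG : G.Connected)
    (O : GraphOrientation G) :
    List.TFAE [O.IsStronglyConnected,
      ¬ ∃ D : Set (Sym2 V), O.IsDirCocycle D,
      ∀ a b, O.dir a b → O.Reaches b a] := by
  tfae_have 1 → 2 := O.not_exists_isDirCocycle
  tfae_have 2 → 3 := fun h a b hab => by_contra fun hba =>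
    h (O.exists_isDirCocycle_of_not_reaches hG hab hba)
  tfae_have 3 → 1 := O.isStronglyConnected_of_forall_reaches hG
  tfae_finish

theorem statement5 {V : Type*} [Fintype V] (G : SimpleGraph V) (hG : G.Connected)
    (O : GraphOrientation G) :
    List.TFAE [O.IsStronglyConnected,
      ¬ ∃ D : Set (Sym2 V), O.IsDirCocycle D,
      ∀ a b, O.dir a b → O.Reaches b a] :=
  statement5_general G hG O
end

section
/- Let G = (V,E) be a finite connected simple graph. The number of acyclic orientations of G equals Σ_{S ⊆ E} (−1)^{|S| + c(S) − |V|}, where c(S) is the number of connected components of the spanning subgraph (V,S). (This sum is the Tutte polynomial evaluation T_G(2,0) via the subgraph expansion.) -/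
section

open Relation SimpleGraph

namespace Relation

variable {α : Type*} {r s : α → α → Prop} {x y p q : α}

theorem ReflTransGen.right_or_exists_left
    (h : ReflTransGen (fun a b => r a b ∨ s a b) p q) :
    ReflTransGen s p q ∨ ∃ a b, ReflTransGen (fun a b => r a b ∨ s a b) p a ∧ r a b ∧
      ReflTransGen (fun a b => r a b ∨ s a b) b q := by
  induction h with
  | refl => exact .inl .refl
  | tail hpa hab ih =>
    rcases hab with hab | hab
    · exact .inr ⟨_, _, hpa, hab, .refl⟩
    · rcases ih with ih | ⟨a, b, h₁, h₂, h₃⟩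
      · exact .inl (ih.tail hab)
      · exact .inr ⟨a, b, h₁, h₂, h₃.tail (.inr hab)⟩

/-- Between two uses of the extra step `x → y`, a path would return from `y` to `x`. -/
theorem ReflTransGen.cases_or_edge (hyx : ¬ ReflTransGen s y x)
    (h : ReflTransGen (fun a b => s a b ∨ (a = x ∧ b = y)) p q) :
    ReflTransGen s p q ∨ (ReflTransGen s p x ∧ ReflTransGen s y q) := by
  induction h with
  | refl => exact .inl .refl
  | tail _ hab ih =>
    rcases hab with hab | ⟨rfl, rfl⟩
    · exact ih.imp (·.tail hab) fun ⟨h₁, h₂⟩ => ⟨h₁, h₂.tail hab⟩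
    · rcases ih with ih | ⟨-, h₂⟩
      · exact .inr ⟨ih, .refl⟩
      · exact absurd h₂ hyx

theorem ReflTransGen.cases_or_edges (hxy : ¬ ReflTransGen s x y) (hyx : ¬ ReflTransGen s y x)
    (h : ReflTransGen (fun a b => s a b ∨ (a = x ∧ b = y) ∨ (a = y ∧ b = x)) p q) :
    ReflTransGen s p q ∨ (ReflTransGen s p x ∧ ReflTransGen s y q) ∨
      (ReflTransGen s p y ∧ ReflTransGen s x q) := by
  induction h with
  | refl => exact .inl .refl
  | tail _ hab ih =>
    rcases hab with hab | ⟨rfl, rfl⟩ | ⟨rfl, rfl⟩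
    · exact ih.imp (·.tail hab) (Or.imp (fun ⟨h₁, h₂⟩ => ⟨h₁, h₂.tail hab⟩)
        fun ⟨h₁, h₂⟩ => ⟨h₁, h₂.tail hab⟩)
    · rcases ih with ih | ⟨-, h₂⟩ | ⟨h₁, -⟩
      · exact .inr (.inl ⟨ih, .refl⟩)
      · exact absurd h₂ hyx
      · exact .inl h₁
    · rcases ih with ih | ⟨h₁, -⟩ | ⟨-, h₂⟩
      · exact .inr (.inr ⟨ih, .refl⟩)
      · exact .inl h₁
      · exact absurd h₂ hxy

end Relation

variable {V : Type*}

theorem Sym2.mk_mem_insert_iff {T : Set (Sym2 V)} {a b x y : V} :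
    s(a, b) ∈ insert s(x, y) T ↔ s(a, b) ∈ T ∨ (a = x ∧ b = y) ∨ (a = y ∧ b = x) := by
  rw [Set.mem_insert_iff, Sym2.eq_iff, or_comm]

theorem SimpleGraph.reachable_fromEdgeSet_iff {T : Set (Sym2 V)} {u v : V} :
    (fromEdgeSet T).Reachable u v ↔ ReflTransGen (fun a b => s(a, b) ∈ T) u v := by
  rw [reachable_iff_reflTransGen]
  constructor
  · exact ReflTransGen.mono (fun a b hab => ((fromEdgeSet_adj _).1 hab).1) _ _
  · refine ReflTransGen.lift' id (fun a b hab => ?_) _ _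
    obtain rfl | hne := eq_or_ne a b
    · exact .refl
    · exact .single ((fromEdgeSet_adj _).2 ⟨hab, hne⟩)

theorem SimpleGraph.deleteEdges_singleton_adj {G : SimpleGraph V} {a b x y : V} :
    (G.deleteEdges {s(x, y)}).Adj a b ↔ G.Adj a b ∧ s(a, b) ≠ s(x, y) := by
  rw [deleteEdges_adj, Set.mem_singleton_iff]

theorem numComponents_empty [Finite V] : numComponents V ∅ = Nat.card V := by
  rw [numComponents, fromEdgeSet_empty]
  exact (Nat.card_congr (Equiv.ofBijective _
    ⟨fun u v h => reachable_bot.1 (ConnectedComponent.exact h), Quot.mk_surjective⟩)).symm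

theorem numComponents_insert_of_reachable {T : Set (Sym2 V)} {x y : V}
    (h : (fromEdgeSet T).Reachable x y) :
    numComponents V (insert s(x, y) T) = numComponents V T := by
  have hreach : (fromEdgeSet (insert s(x, y) T)).Reachable = (fromEdgeSet T).Reachable := by
    ext u v
    refine ⟨fun huv => ?_, (·.mono (fromEdgeSet_mono (Set.subset_insert _ _)))⟩
    rw [reachable_fromEdgeSet_iff] at h huv ⊢
    refine ReflTransGen.lift' id (fun a b hab => ?_) _ _ huv
    rcases Sym2.mk_mem_insert_iff.1 hab with hab | ⟨rfl, rfl⟩ | ⟨rfl, rfl⟩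
    exacts [.single hab, h, reachable_fromEdgeSet_iff.1 (reachable_fromEdgeSet_iff.2 h).symm]
  rw [numComponents, numComponents, ConnectedComponent, ConnectedComponent, hreach]

theorem numComponents_insert_of_not_reachable [Finite V] {T : Set (Sym2 V)} {x y : V}
    (h : ¬ (fromEdgeSet T).Reachable x y) :
    numComponents V (insert s(x, y) T) + 1 = numComponents V T := by
  classical
  set H := fromEdgeSet T
  set H' := fromEdgeSet (insert s(x, y) T)
  have hle : H ≤ H' := fromEdgeSet_mono (Set.subset_insert _ _)
  have hxy : H'.Reachable x y :=
    (fromEdgeSet_adj _).2 ⟨Set.mem_insert _ _, by rintro rfl; exact h .rfl⟩ |>.reachable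
  have hreach {u v : V} (huv : H'.Reachable u v) : H.Reachable u v ∨
      (H.Reachable u x ∧ H.Reachable y v) ∨ (H.Reachable u y ∧ H.Reachable x v) := by
    simp only [H, H', reachable_fromEdgeSet_iff, Sym2.mk_mem_insert_iff] at huv h ⊢
    exact huv.cases_or_edges h fun hyx => h (reachable_fromEdgeSet_iff.1
      (reachable_fromEdgeSet_iff.2 hyx).symm)
  let f (c : {c : H.ConnectedComponent // c ≠ H.connectedComponentMk x}) :
      H'.ConnectedComponent := c.1.map (Hom.ofLE hle)
  have hf : f.Bijective := by
    constructor
    · rintro ⟨c, hc⟩ ⟨d, hd⟩ hcd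
      induction c using ConnectedComponent.ind with | _ u => ?_
      induction d using ConnectedComponent.ind with | _ v => ?_
      simp only [f, ConnectedComponent.map_mk, ConnectedComponent.eq, ne_eq] at hcd hc hd
      rcases hreach hcd with huv | ⟨hux, -⟩ | ⟨-, hxv⟩
      · exact Subtype.ext (ConnectedComponent.sound huv)
      · exact absurd hux hc
      · exact absurd hxv.symm hd
    · intro c
      induction c using ConnectedComponent.ind with | _ v => ?_
      by_cases hv : H.connectedComponentMk v = H.connectedComponentMk x
      · have hyx : H.connectedComponentMk y ≠ H.connectedComponentMk x :=
          fun hyx => h (ConnectedComponent.exact hyx).symm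
        refine ⟨⟨_, hyx⟩, ?_⟩
        simp only [f, ConnectedComponent.map_mk, ConnectedComponent.eq]
        exact hxy.symm.trans ((ConnectedComponent.exact hv).mono hle).symm
      · exact ⟨⟨_, hv⟩, rfl⟩
  rw [numComponents, numComponents, ← Nat.card_congr (Equiv.ofBijective f hf),
    ← Finite.card_option, Nat.card_congr (Equiv.optionSubtypeNe _)]

namespace GraphOrientation

variable {G : SimpleGraph V} {T : Set (Sym2 V)} {x y : V}

@[ext]
theorem ext {O O' : GraphOrientation G} (h : ∀ a b, O.dir a b ↔ O'.dir a b) : O = O' := by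
  cases O; cases O'
  congr
  ext a b
  exact h a b

instance [Finite V] : Finite (GraphOrientation G) :=
  Finite.of_injective dir fun _ _ h => ext fun a b => by rw [h]

theorem not_dir_of_dir (O : GraphOrientation G) {a b : V} (h : O.dir a b) : ¬ O.dir b a :=
  (O.dir_iff_not a b (O.adj_of_dir a b h)).1 h

theorem dir_or_dir_s16 (O : GraphOrientation G) {a b : V} (h : G.Adj a b) : O.dir a b ∨ O.dir b a :=
  or_iff_not_imp_right.2 (O.dir_iff_not a b h).2

theorem reflTransGen_dir_iff_exists_walk (O : GraphOrientation G) {u v : V} :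
    ReflTransGen O.dir u v ↔ ∃ w : G.Walk u v, ∀ d ∈ w.darts, O.dir d.fst d.snd := by
  constructor
  · intro h
    induction h using ReflTransGen.head_induction_on with
    | refl => exact ⟨.nil, by simp⟩
    | head hab _ ih =>
      obtain ⟨w, hw⟩ := ih
      exact ⟨.cons (O.adj_of_dir _ _ hab) w, by simpa [hab] using hw⟩
  · rintro ⟨w, hw⟩
    induction w with
    | nil => exact .refl
    | cons hadj w ih =>
      simp only [Walk.darts_cons, List.mem_cons, forall_eq_or_imp] at hw
      exact .head hw.1 (ih hw.2)

/-- A directed closed walk `a → b ⇝ a` is shortened to a directed cycle by bypassing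
the return path `b ⇝ a`. -/
theorem not_exists_isDirCycle_iff [DecidableEq V] (O : GraphOrientation G) :
    (¬ ∃ C, O.IsDirCycle C) ↔ ∀ a b, O.dir a b → ¬ ReflTransGen O.dir b a := by
  refine ⟨fun hO a b hab hba => hO ?_, ?_⟩
  · obtain ⟨w, hw⟩ := O.reflTransGen_dir_iff_exists_walk.1 hba
    have hp : ∀ d ∈ w.bypass.darts, O.dir d.fst d.snd :=
      fun d hd => hw d (w.darts_bypass_subset_darts hd)
    have hadj := O.adj_of_dir a b hab
    refine ⟨_, a, .cons hadj w.bypass, (Walk.cons_isCycle_iff _ hadj).2 ⟨w.bypass_isPath, ?_⟩,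
      by simpa [hab] using hp, rfl⟩
    intro hmem
    obtain ⟨d, hd, hde⟩ := List.mem_map.1 hmem
    rcases Sym2.eq_iff.1 hde with ⟨-, hdb⟩ | ⟨hdb, hda⟩
    · have hb : d.snd ∈ w.bypass.support.tail := by
        rw [← w.bypass.map_snd_darts]
        exact List.mem_map_of_mem hd
      have := w.bypass_isPath.support_nodup
      rw [← Walk.cons_tail_support] at this
      exact (List.nodup_cons.1 this).1 (hdb ▸ hb)
    · exact O.not_dir_of_dir hab (hdb ▸ hda ▸ hp d hd)
  · rintro hO ⟨C, v, w, hw, hdir, -⟩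
    cases w with
    | nil => exact hw.not_nil .nil
    | cons hadj w =>
      simp only [Walk.darts_cons, List.mem_cons, forall_eq_or_imp] at hdir
      exact hO _ _ hdir.1 (O.reflTransGen_dir_iff_exists_walk.2 ⟨w, hdir.2⟩)

def StepMod (O : GraphOrientation G) (T : Set (Sym2 V)) (a b : V) : Prop :=
  O.dir a b ∨ s(a, b) ∈ T

/-- `O` induces an acyclic orientation of the graph `G / T` obtained by contracting the edges
of `T`; an edge of `G` whose ends are joined by `T` becomes a loop, so it is forbidden. -/
def IsAcyclicMod (O : GraphOrientation G) (T : Set (Sym2 V)) : Prop :=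
  ∀ a b, O.dir a b → ¬ ReflTransGen (O.StepMod T) b a

theorem isAcyclicMod_empty_iff [DecidableEq V] (O : GraphOrientation G) :
    O.IsAcyclicMod ∅ ↔ ¬ ∃ C, O.IsDirCycle C := by
  have : O.StepMod ∅ = O.dir := by ext a b; simp [StepMod]
  rw [not_exists_isDirCycle_iff, IsAcyclicMod, this]

theorem stepMod_insert (O : GraphOrientation G) :
    O.StepMod (insert s(x, y) T) =
      fun a b => O.StepMod T a b ∨ (a = x ∧ b = y) ∨ (a = y ∧ b = x) := by
  ext a b
  rw [StepMod, StepMod, Sym2.mk_mem_insert_iff, or_assoc]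

theorem reflTransGen_stepMod_of_reachable (O : GraphOrientation G) {u v : V}
    (h : (fromEdgeSet T).Reachable u v) : ReflTransGen (O.StepMod T) u v :=
  ReflTransGen.mono (fun _ _ => .inr) _ _ (reachable_fromEdgeSet_iff.1 h)

theorem exists_dir_of_reflTransGen_stepMod (O : GraphOrientation G) {u v : V}
    (huv : ReflTransGen (O.StepMod T) u v) (h : ¬ (fromEdgeSet T).Reachable u v) :
    ∃ a b, ReflTransGen (O.StepMod T) u a ∧ O.dir a b ∧ ReflTransGen (O.StepMod T) b v :=
  (ReflTransGen.right_or_exists_left huv).resolve_left (reachable_fromEdgeSet_iff.not.1 h)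

theorem not_isAcyclicMod_of_reachable {O : GraphOrientation G} (hxy : G.Adj x y)
    (h : (fromEdgeSet T).Reachable x y) : ¬ O.IsAcyclicMod T := fun hO =>
  (O.dir_or_dir_s16 hxy).elim
    (fun hd => hO x y hd (O.reflTransGen_stepMod_of_reachable h.symm))
    (fun hd => hO y x hd (O.reflTransGen_stepMod_of_reachable h))

theorem IsAcyclicMod.not_reflTransGen_and_reflTransGen {O : GraphOrientation G}
    (hO : O.IsAcyclicMod T) (h : ¬ (fromEdgeSet T).Reachable x y) :
    ¬ (ReflTransGen (O.StepMod T) x y ∧ ReflTransGen (O.StepMod T) y x) := by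
  rintro ⟨hxy, hyx⟩
  obtain ⟨a, b, hxa, hab, hby⟩ := O.exists_dir_of_reflTransGen_stepMod hxy h
  exact hO a b hab (hby.trans (hyx.trans hxa))

/-- Contracting the edge `s(x, y)` as well rules out exactly the paths of `O.StepMod T`
between `x` and `y`: such a path uses an edge of `O`, which then closes a cycle through
the contracted edge. -/
theorem isAcyclicMod_insert_iff {O : GraphOrientation G}
    (h : ¬ (fromEdgeSet T).Reachable x y) :
    O.IsAcyclicMod (insert s(x, y) T) ↔ O.IsAcyclicMod T ∧
      ¬ ReflTransGen (O.StepMod T) y x ∧ ¬ ReflTransGen (O.StepMod T) x y := by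
  have hmono : ReflTransGen (O.StepMod T) ≤ ReflTransGen (O.StepMod (insert s(x, y) T)) :=
    ReflTransGen.mono fun _ _ => Or.imp_right (Set.mem_insert_of_mem _)
  have hnot {u v : V} (huv : s(u, v) = s(x, y)) (hT : ¬ (fromEdgeSet T).Reachable v u)
      (hO : O.IsAcyclicMod (insert s(x, y) T)) : ¬ ReflTransGen (O.StepMod T) v u := by
    intro hvu
    obtain ⟨a, b, hva, hab, hbu⟩ := O.exists_dir_of_reflTransGen_stepMod hvu hT
    refine hO a b hab ((hmono _ _ hbu).trans (.head (.inr ?_) (hmono _ _ hva)))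
    rw [huv]
    exact Set.mem_insert _ _
  refine ⟨fun hO => ⟨fun a b hab hba => hO a b hab (hmono _ _ hba),
    hnot rfl (fun hyx => h hyx.symm) hO, hnot Sym2.eq_swap h hO⟩, ?_⟩
  rintro ⟨hO, hyx, hxy⟩ a b hab hba
  rw [stepMod_insert] at hba
  rcases hba.cases_or_edges hxy hyx with hba | ⟨hbx, hya⟩ | ⟨hby, hxa⟩
  · exact hO a b hab hba
  · exact hyx (hya.trans (.head (.inl hab) hbx))
  · exact hxy (hxa.trans (.head (.inl hab) hby))

def extend (hxy : G.Adj x y) (O : GraphOrientation (G.deleteEdges {s(x, y)})) :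
    GraphOrientation G where
  dir a b := O.dir a b ∨ (a = x ∧ b = y)
  adj_of_dir a b := by
    rintro (h | ⟨rfl, rfl⟩)
    exacts [(deleteEdges_singleton_adj.1 (O.adj_of_dir a b h)).1, hxy]
  dir_iff_not a b hab := by
    by_cases he : s(a, b) = s(x, y)
    · have hnot {u v : V} (huv : s(u, v) = s(x, y)) : ¬ O.dir u v :=
        fun h => (deleteEdges_singleton_adj.1 (O.adj_of_dir u v h)).2 huv
      have hne := hxy.ne
      rcases Sym2.eq_iff.1 he with ⟨rfl, rfl⟩ | ⟨rfl, rfl⟩ <;>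
        simp [hnot rfl, hnot Sym2.eq_swap, hne.symm]
    · have hab' : (G.deleteEdges {s(x, y)}).Adj a b := deleteEdges_singleton_adj.2 ⟨hab, he⟩
      have hba : ¬ (b = x ∧ a = y) := fun ⟨hb, ha⟩ => he (ha ▸ hb ▸ Sym2.eq_swap)
      rw [or_iff_left fun ⟨ha, hb⟩ => he (ha ▸ hb ▸ rfl), or_iff_left hba]
      exact O.dir_iff_not a b hab'

def restrict (O : GraphOrientation G) (x y : V) :
    GraphOrientation (G.deleteEdges {s(x, y)}) where
  dir a b := O.dir a b ∧ s(a, b) ≠ s(x, y)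
  adj_of_dir a b h := deleteEdges_singleton_adj.2 ⟨O.adj_of_dir a b h.1, h.2⟩
  dir_iff_not a b hab := by
    obtain ⟨hab, he⟩ := deleteEdges_singleton_adj.1 hab
    rw [and_iff_left he, and_iff_left (Sym2.eq_swap ▸ he)]
    exact O.dir_iff_not a b hab

theorem extend_restrict (hxy : G.Adj x y) {O : GraphOrientation G} (h : O.dir x y) :
    (O.restrict x y).extend hxy = O := by
  ext a b
  refine ⟨by rintro (⟨hab, -⟩ | ⟨rfl, rfl⟩) <;> assumption, fun hab => ?_⟩
  by_cases he : s(a, b) = s(x, y)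
  · rcases Sym2.eq_iff.1 he with ⟨rfl, rfl⟩ | ⟨rfl, rfl⟩
    · exact .inr ⟨rfl, rfl⟩
    · exact absurd hab (O.not_dir_of_dir h)
  · exact .inl ⟨hab, he⟩

theorem extend_injective (hxy : G.Adj x y) : Function.Injective (extend hxy) := by
  intro O O' h
  ext a b
  have hab : O.dir a b ∨ (a = x ∧ b = y) ↔ O'.dir a b ∨ (a = x ∧ b = y) :=
    iff_of_eq (congrArg (fun O => O.dir a b) h)
  by_cases he : a = x ∧ b = y
  · obtain ⟨rfl, rfl⟩ := he
    exact iff_of_false (fun h => (deleteEdges_singleton_adj.1 (O.adj_of_dir _ _ h)).2 rfl)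
      (fun h => (deleteEdges_singleton_adj.1 (O'.adj_of_dir _ _ h)).2 rfl)
  · rwa [or_iff_left he, or_iff_left he] at hab

theorem ncard_setOf_and_dir (hxy : G.Adj x y) (P : GraphOrientation G → Prop) :
    {O | P O ∧ O.dir x y}.ncard =
      {O : GraphOrientation (G.deleteEdges {s(x, y)}) | P (O.extend hxy)}.ncard := by
  rw [← Set.ncard_image_of_injective _ (extend_injective hxy)]
  congr 1
  ext O
  refine ⟨fun ⟨hO, h⟩ => ⟨O.restrict x y, by rwa [Set.mem_ofPred_eq, extend_restrict hxy h],
    extend_restrict hxy h⟩, ?_⟩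
  rintro ⟨O, hO, rfl⟩
  exact ⟨hO, .inr ⟨rfl, rfl⟩⟩

theorem isAcyclicMod_extend_iff (hxy : G.Adj x y)
    {O : GraphOrientation (G.deleteEdges {s(x, y)})} :
    (O.extend hxy).IsAcyclicMod T ↔ O.IsAcyclicMod T ∧ ¬ ReflTransGen (O.StepMod T) y x := by
  have hstep : (O.extend hxy).StepMod T = fun a b => O.StepMod T a b ∨ (a = x ∧ b = y) := by
    ext a b
    exact or_right_comm
  have hmono : ReflTransGen (O.StepMod T) ≤ ReflTransGen ((O.extend hxy).StepMod T) :=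
    ReflTransGen.mono fun _ _ => Or.imp_left .inl
  refine ⟨fun hO => ⟨fun a b hab hba => hO a b (.inl hab) (hmono _ _ hba),
    fun hyx => hO x y (.inr ⟨rfl, rfl⟩) (hmono _ _ hyx)⟩, ?_⟩
  rintro ⟨hO, hyx⟩ a b hab hba
  rw [hstep] at hba
  rcases hab, hba.cases_or_edge hyx with ⟨hab | ⟨rfl, rfl⟩, hba | ⟨hbx, hya⟩⟩
  · exact hO a b hab hba
  · exact hyx (hya.trans (.head (.inl hab) hbx))
  · exact hyx hba
  · exact hyx hbx

theorem ncard_isAcyclicMod_eq_add [Finite V] (hxy : G.Adj x y)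
    (h : ¬ (fromEdgeSet T).Reachable x y) :
    {O : GraphOrientation G | O.IsAcyclicMod T}.ncard =
      {O : GraphOrientation (G.deleteEdges {s(x, y)}) | O.IsAcyclicMod T}.ncard +
        {O : GraphOrientation (G.deleteEdges {s(x, y)}) |
          O.IsAcyclicMod (insert s(x, y) T)}.ncard := by
  set X := {O : GraphOrientation (G.deleteEdges {s(x, y)}) |
    O.IsAcyclicMod T ∧ ¬ ReflTransGen (O.StepMod T) y x}
  set Y := {O : GraphOrientation (G.deleteEdges {s(x, y)}) |
    O.IsAcyclicMod T ∧ ¬ ReflTransGen (O.StepMod T) x y}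
  have hsplit : {O : GraphOrientation G | O.IsAcyclicMod T}.ncard = X.ncard + Y.ncard := by
    have hunion : {O : GraphOrientation G | O.IsAcyclicMod T} =
        {O | O.IsAcyclicMod T ∧ O.dir x y} ∪ {O | O.IsAcyclicMod T ∧ O.dir y x} := by
      ext O
      simp only [Set.mem_ofPred_eq, Set.mem_union, ← and_or_left, iff_self_and]
      exact fun _ => O.dir_or_dir_s16 hxy
    have hdisj : Disjoint {O : GraphOrientation G | O.IsAcyclicMod T ∧ O.dir x y}
        {O | O.IsAcyclicMod T ∧ O.dir y x} :=
      Set.disjoint_left.2 fun O h h' => O.not_dir_of_dir h.2 h'.2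
    rw [hunion, Set.ncard_union_eq hdisj, ncard_setOf_and_dir hxy, ncard_setOf_and_dir hxy.symm]
    simp only [isAcyclicMod_extend_iff]
    rw [Sym2.eq_swap (a := y)]
  have hunion : X ∪ Y = {O | O.IsAcyclicMod T} := by
    ext O
    simp only [X, Y, Set.mem_union, Set.mem_ofPred_eq, ← and_or_left, and_iff_left_iff_imp,
      ← not_and_or]
    exact fun hO hyx => hO.not_reflTransGen_and_reflTransGen h hyx.symm
  have hinter : X ∩ Y = {O | O.IsAcyclicMod (insert s(x, y) T)} := by
    ext O
    simp only [X, Y, Set.mem_inter_iff, Set.mem_ofPred_eq, isAcyclicMod_insert_iff h]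
    tauto
  rw [hsplit, ← hunion, ← hinter, Set.ncard_union_add_ncard_inter]

end GraphOrientation

open GraphOrientation in
theorem ncard_isAcyclicMod_eq_sum [Finite V] [DecidableEq V] (E : Finset (Sym2 V))
    (G : SimpleGraph V) (hE : G.edgeSet = E) (T : Set (Sym2 V)) :
    ({O : GraphOrientation G | O.IsAcyclicMod T}.ncard : ℤ) =
      ∑ S ∈ E.powerset, (-1) ^ (S.card + numComponents V (↑S ∪ T) + numComponents V T) := by
  induction E using Finset.induction_on generalizing G T with
  | empty =>
    have hdir (O : GraphOrientation G) (a b : V) : ¬ O.dir a b := fun h => by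
      simpa [← mem_edgeSet, hE] using O.adj_of_dir a b h
    let O₀ : GraphOrientation G := ⟨fun _ _ => False, fun _ _ => False.elim, fun a b h => by
      simp [← mem_edgeSet, hE] at h⟩
    have hunique : {O : GraphOrientation G | O.IsAcyclicMod T} = {O₀} :=
      Set.eq_singleton_iff_unique_mem.2 ⟨fun a b h => (hdir O₀ a b h).elim,
        fun O _ => ext fun a b => iff_of_false (hdir O a b) (hdir O₀ a b)⟩
    simp [hunique, ← two_mul]
  | @insert e E he ih =>
    induction e using Sym2.ind with | _ x y => ?_
    have hxy : G.Adj x y := by simp [← mem_edgeSet, hE]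
    have hE' : (G.deleteEdges {s(x, y)}).edgeSet = E := by
      rw [edgeSet_deleteEdges, hE, Finset.coe_insert, Set.insert_sdiff_self_of_notMem he]
    have hS (S : Finset (Sym2 V)) : ↑(insert s(x, y) S) ∪ T = ↑S ∪ insert s(x, y) T := by
      rw [Finset.coe_insert, Set.insert_union, Set.union_insert]
    rw [Finset.sum_powerset_insert he]
    by_cases h : (fromEdgeSet T).Reachable x y
    · have hempty : {O : GraphOrientation G | O.IsAcyclicMod T} = ∅ :=
        Set.eq_empty_of_forall_notMem fun _ => not_isAcyclicMod_of_reachable hxy h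
      rw [hempty, Set.ncard_empty, Nat.cast_zero, ← Finset.sum_add_distrib,
        Finset.sum_eq_zero]
      intro S hSE
      have hSx : s(x, y) ∉ S := fun hx => he (Finset.mem_powerset.1 hSE hx)
      rw [Finset.card_insert_of_notMem hSx, hS, Set.union_insert,
        numComponents_insert_of_reachable (h.mono (fromEdgeSet_mono Set.subset_union_right))]
      ring
    · rw [ncard_isAcyclicMod_eq_add hxy h, Nat.cast_add, ih _ hE', ih _ hE',
        ← numComponents_insert_of_not_reachable h]
      congr 1
      refine Finset.sum_congr rfl fun S hSE => ?_
      have hSx : s(x, y) ∉ S := fun hx => he (Finset.mem_powerset.1 hSE hx)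
      rw [Finset.card_insert_of_notMem hSx, hS]
      ring

theorem neg_one_zpow_natCast_add_sub (a b n : ℕ) :
    (((-1 : ℤˣ) ^ ((a : ℤ) + b - n) : ℤˣ) : ℤ) = (-1) ^ (a + b + n) := by
  rw [zpow_sub, Int.units_inv_eq_self, ← Nat.cast_add, zpow_natCast, zpow_natCast, ← pow_add]
  push_cast
  rfl

end

theorem statement16_general {V : Type*} [Fintype V] [DecidableEq V] (G : SimpleGraph V)
    [DecidableRel G.Adj] :
    ({O : GraphOrientation G | ¬ ∃ C : Set (Sym2 V), O.IsDirCycle C}.ncard : ℤ) =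
      ∑ S ∈ G.edgeFinset.powerset,
        ((((-1 : ℤˣ) ^ ((S.card : ℤ) + (numComponents V (↑S : Set (Sym2 V)) : ℤ)
          - (Fintype.card V : ℤ)) : ℤˣ)) : ℤ) := by
  have h := ncard_isAcyclicMod_eq_sum G.edgeFinset G G.coe_edgeFinset.symm ∅
  simp only [GraphOrientation.isAcyclicMod_empty_iff, Set.union_empty, numComponents_empty,
    Nat.card_eq_fintype_card] at h
  simp only [h, neg_one_zpow_natCast_add_sub]

theorem statement16 {V : Type*} [Fintype V] [DecidableEq V] (G : SimpleGraph V)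
    [DecidableRel G.Adj] (hG : G.Connected) :
    ({O : GraphOrientation G | ¬ ∃ C : Set (Sym2 V), O.IsDirCycle C}.ncard : ℤ) =
      ∑ S ∈ G.edgeFinset.powerset,
        ((((-1 : ℤˣ) ^ ((S.card : ℤ) + (numComponents V (↑S : Set (Sym2 V)) : ℤ)
          - (Fintype.card V : ℤ)) : ℤˣ)) : ℤ) :=
  statement16_general G
end
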